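/- arXiv:2105.06787 — 8 statements merged into one kernel-verified Lean document; each statement's English description precedes it below -/
import Mathlib

section
/- If binary relations R and S on X have a common demonic refinement T (i.e., T ⊑ R and T ⊑ S), then dom(R) ∩ dom(S) = dom(R ∩ S). -/
def dom {X : Type*} (R : Set (X × X)) : Set X := {x | ∃ y, (x, y) ∈ R}

def restr {X : Type*} (R : Set (X × X)) (D : Set X) : Set (X × X) := {p ∈ R | p.1 ∈ D}

def djoin {X : Type*} (R S : Set (X × X)) : Set (X × X) := restr (R ∪ S) (dom R ∩ dom S)

def dref {X : Type*} (R S : Set (X × X)) : Prop := dom S ⊆ dom R ∧ restr R (dom S) ⊆ S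

def dmeet {X : Type*} (R S : Set (X × X)) : Set (X × X) :=
  (R ∩ S) ∪ restr R (dom S)ᶜ ∪ restr S (dom R)ᶜ

def rcomp {X : Type*} (R S : Set (X × X)) : Set (X × X) :=
  {p | ∃ y, (p.1, y) ∈ R ∧ (y, p.2) ∈ S}

def dcomp {X : Type*} (R S : Set (X × X)) : Set (X × X) :=
  {p ∈ rcomp R S | ∀ z, (p.1, z) ∈ R → z ∈ dom S}

def ran {X : Type*} (R : Set (X × X)) : Set X := {y | ∃ x, (x, y) ∈ R}

def ext {X : Type*} (R : Set (X × X)) : Set ((X ⊕ Unit) × (X ⊕ Unit)) :=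
  {p | ∃ x y, (x, y) ∈ R ∧ p = (Sum.inl x, Sum.inl y)} ∪
  {p | ∃ x, x ∈ dom R ∧ p = (Sum.inl x, Sum.inr ())}

theorem stmt4 {X : Type*} (R S T : Set (X × X))
    (hR : dref T R) (hS : dref T S) :
    dom R ∩ dom S = dom (R ∩ S) := by
  apply Set.Subset.antisymm
  · rintro x ⟨hxR, hxS⟩
    obtain ⟨y, hyT⟩ := hR.1 hxR
    exact ⟨y, hR.2 ⟨hyT, hxR⟩, hS.2 ⟨hyT, hxS⟩⟩
  · rintro x ⟨y, hyR, hyS⟩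
    exact ⟨⟨y, hyR⟩, ⟨y, hyS⟩⟩
end

section
/- If binary relations R and S on X satisfy dom(R) ∩ dom(S) = dom(R ∩ S), then the relation R ⊓ S := (R ∩ S) ∪ (R restricted to the complement of dom(S)) ∪ (S restricted to the complement of dom(R)) is a common demonic refinement of R and S, i.e., R ⊓ S ⊑ R and R ⊓ S ⊑ S. -/
theorem stmt5 {X : Type*} (R S : Set (X × X))
    (h : dom R ∩ dom S = dom (R ∩ S)) :
    dref (dmeet R S) R ∧ dref (dmeet R S) S := by
  have hdom : ∀ x, x ∈ dom R ∪ dom S → x ∈ dom (dmeet R S) := by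
    rintro x (⟨y, hy⟩ | ⟨y, hy⟩)
    · by_cases hs : x ∈ dom S
      · have : x ∈ dom (R ∩ S) := h ▸ ⟨⟨y, hy⟩, hs⟩
        obtain ⟨z, hz⟩ := this
        exact ⟨z, Or.inl (Or.inl hz)⟩
      · exact ⟨y, Or.inl (Or.inr ⟨hy, hs⟩)⟩
    · by_cases hr : x ∈ dom R
      · have : x ∈ dom (R ∩ S) := h ▸ ⟨hr, ⟨y, hy⟩⟩
        obtain ⟨z, hz⟩ := this
        exact ⟨z, Or.inl (Or.inl hz)⟩
      · exact ⟨y, Or.inr ⟨hy, hr⟩⟩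
  refine ⟨⟨fun x hx => hdom x (Or.inl hx), ?_⟩, ⟨fun x hx => hdom x (Or.inr hx), ?_⟩⟩
  · rintro ⟨x, y⟩ ⟨(⟨hR, _⟩ | ⟨hR, _⟩) | ⟨_, hnr⟩, hx⟩
    · exact hR
    · exact hR
    · exact absurd hx hnr
  · rintro ⟨x, y⟩ ⟨(⟨_, hS⟩ | ⟨_, hns⟩) | ⟨hS, _⟩, hx⟩
    · exact hS
    · exact absurd hx hns
    · exact hS
end

section
/- If binary relations R and S on X satisfy dom(R) ∩ dom(S) = dom(R ∩ S), then R ⊓ S := (R ∩ S) ∪ (R ↾ complement of dom(S)) ∪ (S ↾ complement of dom(R)) is the greatest lower bound of R and S with respect to demonic refinement: any T with T ⊑ R and T ⊑ S satisfies T ⊑ R ⊓ S. -/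
theorem stmt6 {X : Type*} (R S : Set (X × X))
    (h : dom R ∩ dom S = dom (R ∩ S)) :
    ∀ T : Set (X × X), dref T R → dref T S → dref T (dmeet R S) := by
  rintro T ⟨hRd, hRr⟩ ⟨hSd, hSr⟩
  constructor
  · rintro x ⟨y, hy⟩
    rcases hy with (⟨hy, -⟩ | ⟨hy, -⟩) | ⟨hy, -⟩
    · exact hRd ⟨y, hy⟩
    · exact hRd ⟨y, hy⟩
    · exact hSd ⟨y, hy⟩
  · rintro ⟨x, y⟩ ⟨hT, z, hz⟩
    rcases hz with (⟨hz1, hz2⟩ | ⟨hz, hzS⟩) | ⟨hz, hzR⟩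
    · have hx : x ∈ dom R ∩ dom S := h.symm ▸ (⟨z, ⟨hz1, hz2⟩⟩ : x ∈ dom (R ∩ S))
      exact Or.inl (Or.inl ⟨hRr ⟨hT, hx.1⟩, hSr ⟨hT, hx.2⟩⟩)
    · exact Or.inl (Or.inr ⟨hRr ⟨hT, ⟨z, hz⟩⟩, hzS⟩)
    · exact Or.inr ⟨hSr ⟨hT, ⟨z, hz⟩⟩, hzR⟩
end

section
/- Demonic composition of binary relations, defined by R * S = {(x,y) ∈ R;S | ∀z, (x,z) ∈ R → z ∈ dom(S)}, is associative. -/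
theorem stmt12 {X : Type*} (R S T : Set (X × X)) :
    dcomp (dcomp R S) T = dcomp R (dcomp S T) := by
  ext ⟨x, w⟩
  simp only [dcomp, rcomp, dom, Set.mem_setOf_eq, Set.mem_sep_iff]
  constructor
  · rintro ⟨⟨y, ⟨⟨u, hxu, huy⟩, hside⟩, hyw⟩, hcond⟩
    refine ⟨⟨u, hxu, ⟨⟨y, huy, hyw⟩, ?_⟩⟩, ?_⟩
    · intro z hz
      exact hcond z ⟨⟨u, hxu, hz⟩, hside⟩
    · intro z hxz
      obtain ⟨u', hu'⟩ := hside z hxz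
      obtain ⟨t, ht⟩ := hcond u' ⟨⟨z, hxz, hu'⟩, hside⟩
      refine ⟨t, ⟨u', hu', ht⟩, ?_⟩
      intro p hp
      exact hcond p ⟨⟨z, hxz, hp⟩, hside⟩
  · rintro ⟨⟨v, hxv, ⟨⟨y, hvy, hyw⟩, hside⟩⟩, hcond⟩
    have hdomS : ∀ z, (x, z) ∈ R → ∃ u, (z, u) ∈ S := by
      intro z hxz
      obtain ⟨p, ⟨u, hu, _⟩, _⟩ := hcond z hxz
      exact ⟨u, hu⟩
    refine ⟨⟨y, ⟨⟨v, hxv, hvy⟩, hdomS⟩, hyw⟩, ?_⟩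
    rintro z ⟨⟨v', hxv', hv'z⟩, _⟩
    obtain ⟨p, _, hside'⟩ := hcond v' hxv'
    exact hside' z hv'z
end

section
/- Consider the 3-element algebra S = {z, e, g} with binary operations · and ∘ given by: z·x = x·z = z for all x, e·e = e, g·g = g, e·g = g·e = z; z∘x = x∘z = z for all x, e∘e = e, e∘g = g∘e = g, g∘g = g. The map θ over base ℚ ∪ {⊥} given by z^θ = {(q,⊥) | q ∈ ℚ} ∪ {(⊥,⊥)}, e^θ = {(q,q) | q ∈ ℚ} ∪ z^θ, g^θ = {(q,r) | q < r ∈ ℚ} ∪ z^θ is an injective map that represents ∘ as ordinary relational composition and · as demonic meet: for all a, b ∈ S, (a∘b)^θ = a^θ ; b^θ and (a·b)^θ = a^θ ⊓ b^θ. -/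
inductive PA where
  | z : PA
  | e : PA
  | g : PA

def pmul : PA → PA → PA
  | .z, _ => .z
  | _, .z => .z
  | .e, .e => .e
  | .g, .g => .g
  | .e, .g => .z
  | .g, .e => .z

def pcmp : PA → PA → PA
  | .z, _ => .z
  | _, .z => .z
  | .e, .e => .e
  | .e, .g => .g
  | .g, .e => .g
  | .g, .g => .g

def zrel : Set (Option ℚ × Option ℚ) :=
  {p | ∃ q : ℚ, p = (some q, none)} ∪ {(none, none)}

def prep : PA → Set (Option ℚ × Option ℚ)
  | .z => zrel
  | .e => {p | ∃ q : ℚ, p = (some q, some q)} ∪ zrel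
  | .g => {p | ∃ q r : ℚ, q < r ∧ p = (some q, some r)} ∪ zrel

lemma mem_zrel {x y : Option ℚ} : (x, y) ∈ zrel ↔ y = none := by
  constructor
  · rintro (⟨q, h⟩ | h) <;> simp_all [zrel, Prod.ext_iff]
  · rintro rfl
    cases x with
    | none => right; rfl
    | some q => left; exact ⟨q, rfl⟩

lemma mem_z {x y : Option ℚ} : (x, y) ∈ prep .z ↔ y = none := mem_zrel

lemma mem_e {x y : Option ℚ} :
    (x, y) ∈ prep .e ↔ y = none ∨ ∃ q : ℚ, x = some q ∧ y = some q := by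
  show _ ∈ _ ∪ _ ↔ _
  rw [Set.mem_union, mem_zrel]
  simp [Prod.ext_iff, and_comm, or_comm]

lemma mem_g {x y : Option ℚ} :
    (x, y) ∈ prep .g ↔ y = none ∨ ∃ q r : ℚ, q < r ∧ x = some q ∧ y = some r := by
  show _ ∈ _ ∪ _ ↔ _
  rw [Set.mem_union, mem_zrel]
  simp [Prod.ext_iff, or_comm]


lemma mem_cases (a : PA) : a = .z ∨ a = .e ∨ a = .g := by cases a <;> simp

lemma zrel_subset (a : PA) : zrel ⊆ prep a := by
  cases a
  · exact subset_rfl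
  · exact Set.subset_union_right
  · exact Set.subset_union_right

lemma dom_prep (a : PA) : dom (prep a) = Set.univ := by
  ext x
  simp only [Set.mem_univ, iff_true]
  exact ⟨none, zrel_subset a (mem_zrel.2 rfl)⟩

lemma none_fst (a : PA) {y : Option ℚ} (h : (none, y) ∈ prep a) : y = none := by
  cases a
  · exact mem_z.1 h
  · rcases mem_e.1 h with h | ⟨q, h, _⟩
    · exact h
    · exact absurd h (by simp)
  · rcases mem_g.1 h with h | ⟨q, r, _, h, _⟩
    · exact h
    · exact absurd h (by simp)

lemma comp_z_left (a : PA) : rcomp (prep .z) (prep a) = prep .z := by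
  ext ⟨x, y⟩
  constructor
  · rintro ⟨m, h1, h2⟩
    rw [mem_z] at h1 ⊢
    subst h1
    exact none_fst a h2
  · intro h
    rw [mem_z] at h
    subst h
    exact ⟨none, mem_z.2 rfl, zrel_subset a (mem_zrel.2 rfl)⟩

lemma comp_z_right (a : PA) : rcomp (prep a) (prep .z) = prep .z := by
  ext ⟨x, y⟩
  constructor
  · rintro ⟨m, _, h2⟩
    exact mem_z.2 (mem_z.1 h2)
  · intro h
    rw [mem_z] at h
    subst h
    exact ⟨none, zrel_subset a (mem_zrel.2 rfl), mem_z.2 rfl⟩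

lemma comp_ee : rcomp (prep .e) (prep .e) = prep .e := by
  ext ⟨x, y⟩
  simp only [rcomp, Set.mem_setOf_eq, mem_e]
  constructor
  · rintro ⟨m, (rfl | ⟨q, rfl, rfl⟩), h2⟩
    · left; rcases h2 with rfl | h
      · rfl
      · simp_all
    · exact h2
  · rintro (rfl | ⟨q, rfl, rfl⟩)
    · exact ⟨none, Or.inl rfl, Or.inl rfl⟩
    · exact ⟨some q, Or.inr ⟨q, rfl, rfl⟩, Or.inr ⟨q, rfl, rfl⟩⟩

lemma comp_eg : rcomp (prep .e) (prep .g) = prep .g := by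
  ext ⟨x, y⟩
  simp only [rcomp, Set.mem_setOf_eq, mem_e, mem_g]
  constructor
  · rintro ⟨m, (rfl | ⟨q, rfl, rfl⟩), h2⟩
    · left; rcases h2 with rfl | h
      · rfl
      · simp_all
    · exact h2
  · rintro (rfl | ⟨q, r, hqr, rfl, rfl⟩)
    · exact ⟨none, Or.inl rfl, Or.inl rfl⟩
    · exact ⟨some q, Or.inr ⟨q, rfl, rfl⟩, Or.inr ⟨q, r, hqr, rfl, rfl⟩⟩

lemma comp_ge : rcomp (prep .g) (prep .e) = prep .g := by
  ext ⟨x, y⟩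
  simp only [rcomp, Set.mem_setOf_eq, mem_e, mem_g]
  constructor
  · rintro ⟨m, (rfl | ⟨q, r, hqr, rfl, rfl⟩), h2⟩
    · left; rcases h2 with rfl | h
      · rfl
      · simp_all
    · rcases h2 with rfl | ⟨s, hs, rfl⟩
      · exact Or.inl rfl
      · exact Or.inr ⟨q, s, by simp_all, rfl, rfl⟩
  · rintro (rfl | ⟨q, r, hqr, rfl, rfl⟩)
    · exact ⟨none, Or.inl rfl, Or.inl rfl⟩
    · exact ⟨some r, Or.inr ⟨q, r, hqr, rfl, rfl⟩, Or.inr ⟨r, rfl, rfl⟩⟩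

lemma comp_gg : rcomp (prep .g) (prep .g) = prep .g := by
  ext ⟨x, y⟩
  simp only [rcomp, Set.mem_setOf_eq, mem_g]
  constructor
  · rintro ⟨m, (rfl | ⟨q, r, hqr, rfl, rfl⟩), h2⟩
    · left; rcases h2 with rfl | h
      · rfl
      · simp_all
    · rcases h2 with rfl | ⟨s, t, hst, hs, rfl⟩
      · exact Or.inl rfl
      · refine Or.inr ⟨q, t, ?_, rfl, rfl⟩
        have hrs : r = s := by simpa using hs
        subst hrs
        exact hqr.trans hst
  · rintro (rfl | ⟨q, r, hqr, rfl, rfl⟩)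
    · exact ⟨none, Or.inl rfl, Or.inl rfl⟩
    · obtain ⟨m, hm1, hm2⟩ := exists_between hqr
      exact ⟨some m, Or.inr ⟨q, m, hm1, rfl, rfl⟩, Or.inr ⟨m, r, hm2, rfl, rfl⟩⟩

lemma dmeet_prep (a b : PA) : dmeet (prep a) (prep b) = prep a ∩ prep b := by
  unfold dmeet restr
  rw [dom_prep, dom_prep]
  simp

lemma inter_z_left (a : PA) : prep .z ∩ prep a = prep .z :=
  Set.inter_eq_left.2 (zrel_subset a)

lemma inter_z_right (a : PA) : prep a ∩ prep .z = prep .z :=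
  Set.inter_eq_right.2 (zrel_subset a)

lemma inter_eg : prep .e ∩ prep .g = prep .z := by
  ext ⟨x, y⟩
  simp only [Set.mem_inter_iff, mem_e, mem_g, mem_z]
  constructor
  · rintro ⟨rfl | ⟨q, rfl, rfl⟩, h2⟩
    · rfl
    · rcases h2 with h | ⟨s, t, hst, hs, ht⟩
      · exact h
      · simp_all
  · rintro rfl
    exact ⟨Or.inl rfl, Or.inl rfl⟩

lemma inter_ge : prep .g ∩ prep .e = prep .z := by
  rw [Set.inter_comm]; exact inter_eg

lemma ne_ze : prep .z ≠ prep .e := by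
  intro h
  have h0 : ((some 0 : Option ℚ), some 0) ∈ prep .e := mem_e.2 (Or.inr ⟨0, rfl, rfl⟩)
  rw [← h] at h0
  exact absurd (mem_z.1 h0) (by simp)

lemma ne_zg : prep .z ≠ prep .g := by
  intro h
  have h0 : ((some 0 : Option ℚ), some 1) ∈ prep .g :=
    mem_g.2 (Or.inr ⟨0, 1, by norm_num, rfl, rfl⟩)
  rw [← h] at h0
  exact absurd (mem_z.1 h0) (by simp)

lemma ne_eg : prep .e ≠ prep .g := by
  intro h
  have h0 : ((some 0 : Option ℚ), some 0) ∈ prep .e := mem_e.2 (Or.inr ⟨0, rfl, rfl⟩)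
  rw [h] at h0
  rcases mem_g.1 h0 with h1 | ⟨q, r, hqr, hq, hr⟩
  · simp at h1
  · simp_all

theorem stmt14 :
    Function.Injective prep ∧
    (∀ a b : PA, prep (pcmp a b) = rcomp (prep a) (prep b)) ∧
    (∀ a b : PA, prep (pmul a b) = dmeet (prep a) (prep b)) := by
  refine ⟨?_, ?_, ?_⟩
  · intro a b h
    cases a <;> cases b <;>
      first
        | rfl
        | exact absurd h ne_ze | exact absurd h.symm ne_ze
        | exact absurd h ne_zg | exact absurd h.symm ne_zg
        | exact absurd h ne_eg | exact absurd h.symm ne_eg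
  · intro a b
    cases a <;> cases b <;>
      first
        | exact (comp_z_left _).symm
        | exact (comp_z_right _).symm
        | exact comp_ee.symm
        | exact comp_eg.symm
        | exact comp_ge.symm
        | exact comp_gg.symm
  · intro a b
    rw [dmeet_prep]
    cases a <;> cases b <;>
      first
        | exact (inter_z_left _).symm
        | exact (inter_z_right _).symm
        | exact (Set.inter_self _).symm
        | exact inter_eg.symm
        | exact inter_ge.symm
end

section
/- In the setting of the 3-element demonic meet semigroup S = {z, e, g} (with z·g = z and z = g∘z, etc.), suppose θ is a representation of S by binary relations over some base X, interpreting ∘ as ordinary composition and · as demonic meet, with z^θ ≠ g^θ. Then there is no pair (x,y) ∈ z^θ \ g^θ; consequently there exists a pair (x₀,y₀) ∈ g^θ \ z^θ. -/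
theorem stmt15 {X : Type*} (θ : PA → Set (X × X))
    (hcmp : ∀ a b : PA, θ (pcmp a b) = rcomp (θ a) (θ b))
    (hmul : ∀ a b : PA, θ (pmul a b) = dmeet (θ a) (θ b))
    (hinj : Function.Injective θ) :
    (¬ ∃ p : X × X, p ∈ θ .z \ θ .g) ∧ (∃ p : X × X, p ∈ θ .g \ θ .z) := by
  have hZG : θ .z ⊆ θ .g := by
    intro p hp
    have h1 : θ .z = dmeet (θ .z) (θ .g) := hmul .z .g
    have h2 : θ .z = rcomp (θ .g) (θ .z) := hcmp .g .z
    have hdom : p.1 ∈ dom (θ .g) := by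
      rw [h2] at hp
      obtain ⟨w, hw, _⟩ := hp
      exact ⟨w, hw⟩
    rw [h1] at hp
    simp only [dmeet, restr, Set.mem_union, Set.mem_inter_iff, Set.mem_setOf_eq,
      Set.mem_compl_iff] at hp
    rcases hp with (⟨_, h⟩ | ⟨_, h⟩) | ⟨h, _⟩
    · exact h
    · exact absurd hdom h
    · exact h
  constructor
  · rintro ⟨p, hp⟩; exact hp.2 (hZG hp.1)
  · by_contra h
    push_neg at h
    have hsub : θ .g ⊆ θ .z := fun p hp => by
      by_contra hn; exact (h p) ⟨hp, hn⟩
    have heq : θ PA.z = θ PA.g := Set.Subset.antisymm hZG hsub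
    exact PA.noConfusion (hinj heq)
end

section
/- In the setting of the 3-element demonic meet semigroup S = {z, e, g}, for any representation θ of S by binary relations on a base X (ordinary composition for ∘, demonic meet for ·, injective θ), the relation g^θ \ z^θ restricted as follows is irreflexive and transitive-like enough to force infinitude: specifically, there exist, for every n, n distinct points y₀, …, y_{n−1} in X such that (y_j, y_i) ∈ g^θ for all i < j and (y_i, y_i) ∉ g^θ for all i. Hence every representation of S has an infinite base. -/
/-!
Write `Z, E, G` for the images of `z, e, g`. The composition laws make `G` idempotent and `E`
transitive, and they force `dom Z ⊆ dom G ⊆ dom E`, so on the demonic meet `Z = E ⊓ G` the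
correction terms vanish and `Z = E ∩ G`. Hence `Z ≠ G` yields a pair `(a, b) ∈ G \ E`.
No endpoint of such a pair carries a `G`-loop: a loop at `a` puts the `E`-factor of any
factorisation `(a, b) ∈ E;G` into `Z`, so `(a, b) ∈ Z;G = Z ⊆ E`, and symmetrically at `b`.
Since `G = G;G` and `E` is transitive, every pair in `G \ E` factors through some `w` with one of
the two factors again in `G \ E`; iterating produces `G`-chains of loop-free points of any length.
-/

section

variable {X : Type*}

theorem dom_rcomp_subset (R S : Set (X × X)) : dom (rcomp R S) ⊆ dom R := by
  rintro x ⟨_, w, hxw, -⟩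
  exact ⟨w, hxw⟩

theorem inter_subset_dmeet (R S : Set (X × X)) : R ∩ S ⊆ dmeet R S :=
  fun _ h => Or.inl (Or.inl h)

theorem mem_inter_of_mem_dmeet {R S : Set (X × X)} {p : X × X} (h : p ∈ dmeet R S)
    (hR : p.1 ∈ dom R) (hS : p.1 ∈ dom S) : p ∈ R ∩ S := by
  rcases h with (h | ⟨-, h⟩) | ⟨-, h⟩
  · exact h
  · exact absurd hS h
  · exact absurd hR h

section DemonicMeet

variable {Z E G : Set (X × X)}

theorem eq_inter_of_eq_dmeet (hGZ : Z ⊆ rcomp G Z) (hEG : G ⊆ rcomp E G) (hm : Z = dmeet E G) :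
    Z = E ∩ G := by
  refine subset_antisymm (fun p hp => ?_) (hm ▸ inter_subset_dmeet E G)
  have hG : p.1 ∈ dom G := dom_rcomp_subset G Z ⟨p.2, hGZ hp⟩
  exact mem_inter_of_mem_dmeet (hm ▸ hp) (dom_rcomp_subset E G (hG.imp fun _ h => hEG h)) hG

theorem mem_of_loop_left (hZ : Z = E ∩ G) (hEG : G ⊆ rcomp E G) (hGE : rcomp G E ⊆ G)
    (hZG : rcomp Z G ⊆ Z) {p q : X} (hpp : (p, p) ∈ G) (hpq : (p, q) ∈ G) : (p, q) ∈ E := by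
  obtain ⟨w, hpw, hwq⟩ := hEG hpq
  have hpwZ : (p, w) ∈ Z := hZ ▸ ⟨hpw, hGE ⟨p, hpp, hpw⟩⟩
  exact (hZ ▸ hZG ⟨w, hpwZ, hwq⟩).1

theorem mem_of_loop_right (hZ : Z = E ∩ G) (hEG : G ⊆ rcomp E G) (hGE : rcomp G E ⊆ G)
    (hZG : rcomp Z G ⊆ Z) (hGZ : rcomp G Z ⊆ Z) {p q : X} (hqq : (q, q) ∈ G)
    (hpq : (p, q) ∈ G) : (p, q) ∈ E := by
  have hqqZ : (q, q) ∈ Z := hZ ▸ ⟨mem_of_loop_left hZ hEG hGE hZG hqq hqq, hqq⟩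
  exact (hZ ▸ hGZ ⟨q, hpq, hqqZ⟩).1

end DemonicMeet

theorem exists_chain_of_mem_diff {E G : Set (X × X)} (hG : G = rcomp G G) (hE : rcomp E E ⊆ E)
    (hloop : ∀ a b, (a, b) ∈ G → (a, b) ∉ E → (a, a) ∉ G ∧ (b, b) ∉ G) (n : ℕ) :
    ∀ a b, (a, b) ∈ G → (a, b) ∉ E → ∃ y : Fin n → X,
      (∀ i j, i < j → (y j, y i) ∈ G) ∧ (∀ i, (y i, y i) ∉ G) ∧
      ∀ i, (a, y i) ∈ G ∧ (y i, b) ∈ G := by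
  have htrans : ∀ {a b c}, (a, b) ∈ G → (b, c) ∈ G → (a, c) ∈ G :=
    fun hab hbc => hG ▸ ⟨_, hab, hbc⟩
  induction n with
  | zero => exact fun _ _ _ _ => ⟨finZeroElim, fun i => i.elim0, fun i => i.elim0, fun i => i.elim0⟩
  | succ n ih =>
    intro a b hab hnab
    obtain ⟨w, haw, hwb⟩ : (a, b) ∈ rcomp G G := hG ▸ hab
    by_cases hEaw : (a, w) ∈ E
    · -- `w` is `G`-below the chain between `w` and `b`, so it goes last
      have hnwb : (w, b) ∉ E := fun hwb => hnab (hE ⟨w, hEaw, hwb⟩)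
      obtain ⟨y, hchain, hirr, hbound⟩ := ih w b hwb hnwb
      refine ⟨Fin.snoc y w, fun i j hij => ?_, fun i => ?_, fun i => ?_⟩
      · induction j using Fin.lastCases with
        | last =>
          obtain ⟨i, rfl⟩ := Fin.exists_castSucc_eq.mpr hij.ne
          simpa using (hbound i).1
        | cast j =>
          obtain ⟨i, rfl⟩ := Fin.exists_castSucc_eq.mpr (hij.trans (Fin.castSucc_lt_last j)).ne
          simpa using hchain i j (Fin.castSucc_lt_castSucc_iff.mp hij)
      · induction i using Fin.lastCases with
        | last => simpa using (hloop w b hwb hnwb).1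
        | cast i => simpa using hirr i
      · induction i using Fin.lastCases with
        | last => simpa using ⟨haw, hwb⟩
        | cast i => simpa using ⟨htrans haw (hbound i).1, (hbound i).2⟩
    · obtain ⟨y, hchain, hirr, hbound⟩ := ih a w haw hEaw
      refine ⟨Fin.cons w y, fun i j hij => ?_, fun i => ?_, fun i => ?_⟩
      · induction j using Fin.cases with
        | zero => exact absurd hij (Fin.not_lt_zero i)
        | succ j =>
          induction i using Fin.cases with
          | zero => simpa using (hbound j).2
          | succ i => simpa using hchain i j (Fin.succ_lt_succ_iff.mp hij)
      · induction i using Fin.cases with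
        | zero => simpa using (hloop a w haw hEaw).2
        | succ i => simpa using hirr i
      · induction i using Fin.cases with
        | zero => simpa using ⟨haw, hwb⟩
        | succ i => simpa using ⟨(hbound i).1, htrans (hbound i).2 hwb⟩

theorem injective_of_chain {G : Set (X × X)} {n : ℕ} {y : Fin n → X}
    (hchain : ∀ i j, i < j → (y j, y i) ∈ G) (hirr : ∀ i, (y i, y i) ∉ G) :
    Function.Injective y := by
  intro i j hij
  by_contra hne
  rcases lt_or_gt_of_ne hne with h | h
  · exact hirr i (hij ▸ hchain i j h)
  · exact hirr j (hij ▸ hchain j i h)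

theorem infinite_of_forall_exists_injective_fin
    (h : ∀ n, ∃ y : Fin n → X, Function.Injective y) : Infinite X := by
  refine not_finite_iff_infinite.mp fun _ => ?_
  cases nonempty_fintype X
  obtain ⟨y, hy⟩ := h (Fintype.card X + 1)
  simpa using Fintype.card_le_of_injective y hy

end

theorem stmt16 {X : Type*} (θ : PA → Set (X × X))
    (hcmp : ∀ a b : PA, θ (pcmp a b) = rcomp (θ a) (θ b))
    (hmul : ∀ a b : PA, θ (pmul a b) = dmeet (θ a) (θ b))
    (hinj : Function.Injective θ) :
    (∀ n : ℕ, ∃ y : Fin n → X, Function.Injective y ∧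
      (∀ i j : Fin n, i < j → (y j, y i) ∈ θ .g) ∧
      (∀ i : Fin n, (y i, y i) ∉ θ .g)) ∧ Infinite X := by
  have hZ : θ .z = θ .e ∩ θ .g :=
    eq_inter_of_eq_dmeet (hcmp .g .z).le (hcmp .e .g).le (hmul .e .g)
  have hloop (a b : X) (hab : (a, b) ∈ θ .g) (hnab : (a, b) ∉ θ .e) :
      (a, a) ∉ θ .g ∧ (b, b) ∉ θ .g :=
    ⟨fun haa => hnab (mem_of_loop_left hZ (hcmp .e .g).le (hcmp .g .e).ge (hcmp .z .g).ge haa hab),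
      fun hbb => hnab (mem_of_loop_right hZ (hcmp .e .g).le (hcmp .g .e).ge (hcmp .z .g).ge
        (hcmp .g .z).ge hbb hab)⟩
  obtain ⟨⟨a, b⟩, hab, hnab⟩ : ∃ p ∈ θ .g, p ∉ θ .e := by
    by_contra! hGE
    exact PA.noConfusion (hinj (hZ.trans (Set.inter_eq_right.mpr hGE)))
  have hchains (n : ℕ) : ∃ y : Fin n → X, Function.Injective y ∧
      (∀ i j : Fin n, i < j → (y j, y i) ∈ θ .g) ∧ (∀ i : Fin n, (y i, y i) ∉ θ .g) := by
    obtain ⟨y, hchain, hirr, -⟩ :=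
      exists_chain_of_mem_diff (hcmp .g .g) (hcmp .e .e).ge hloop n a b hab hnab
    exact ⟨y, injective_of_chain hchain hirr, hchain, hirr⟩
  exact ⟨hchains, infinite_of_forall_exists_injective_fin fun n => (hchains n).imp fun _ h => h.1⟩
end

section
/- In any lattice A with least element 0 and a binary operation ∘ satisfying a ∘ 0 = 0 for all a, if φ is a map from A to binary relations on a base X that represents 0 and ∘ (i.e., φ(a∘b) = φ(a);φ(b)) and is monotone with respect to demonic refinement (a ≤ b implies φ(a) ⊑ φ(b)), then dom(φ(a)) = dom(φ(0)) for every a ∈ A. -/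
theorem stmt17 {A : Type*} [Lattice A] [OrderBot A] {X : Type*}
    (op : A → A → A) (hz : ∀ a : A, op a ⊥ = ⊥)
    (φ : A → Set (X × X))
    (hcomp : ∀ a b : A, φ (op a b) = rcomp (φ a) (φ b))
    (hmono : ∀ a b : A, a ≤ b → dref (φ a) (φ b)) :
    ∀ a : A, dom (φ a) = dom (φ (⊥ : A)) := by
  intro a
  apply Set.Subset.antisymm
  · exact (hmono ⊥ a bot_le).1
  · intro x hx
    obtain ⟨y, hy⟩ := hx
    have h : φ (⊥ : A) = rcomp (φ a) (φ ⊥) := by conv_lhs => rw [← hz a, hcomp]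
    rw [h] at hy
    obtain ⟨z, hz1, _⟩ := hy
    exact ⟨z, hz1⟩
end
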